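/- arXiv:2102.00261 — 2 statements merged into one kernel-verified Lean document; each statement's English description precedes it below -/
import Mathlib

section
/- Let n ≥ 1, T > 0, let A : [0,T] → ℝ^{n×n} be continuous, and let F : [0,T] → ℝ^{n×n} be differentiable with F'(t) = A(t) · F(t) for all t ∈ [0,T]. Then det(F(t)) = det(F(0)) · exp(∫₀ᵗ trace(A(s)) ds) for every t ∈ [0,T]. -/
/-!
Since the determinant is multilinear in the rows, `(det F)'` is the sum over `i` of the
determinants of `F` with its `i`-th row replaced by that of `F' = A F`. That row is
`∑ₗ Aᵢₗ • Fₗ`, so by alternation the `i`-th term is `Aᵢᵢ · det F`, and `f = det F` solves the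
scalar linear equation `f' = (trace A) f`. Its solutions are found by observing that
`f · exp (-∫ trace A)` has zero derivative.
-/

open Matrix Set Real

section Jacobi

variable {n : Type*} [Fintype n] [DecidableEq n]

def Matrix.detRowContinuousMultilinearMap {𝕜 : Type*} [NontriviallyNormedField 𝕜] :
    ContinuousMultilinearMap 𝕜 (fun _ : n => n → 𝕜) 𝕜 where
  toMultilinearMap := (detRowAlternating (R := 𝕜)).toMultilinearMap
  cont := continuous_id.matrix_det

theorem Matrix.hasDerivAt_det {𝕜 : Type*} [NontriviallyNormedField 𝕜] {M : 𝕜 → Matrix n n 𝕜}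
    {M' : Matrix n n 𝕜} {x : 𝕜} (hM : HasDerivAt M M' x) :
    HasDerivAt (fun t => (M t).det) (∑ i, ((M x).updateRow i (M' i)).det) x :=
  (((detRowContinuousMultilinearMap (𝕜 := 𝕜) (n := n)).hasFDerivAt (M x)).comp_hasDerivAt x
    hM).congr_deriv (ContinuousMultilinearMap.linearDeriv_apply _ _ _)

theorem Matrix.sum_det_updateRow_mul {R : Type*} [CommRing R] (A M : Matrix n n R) :
    ∑ i, (M.updateRow i ((A * M) i)).det = A.trace * M.det := by
  have hrow : ∀ i, (A * M) i = ∑ l, A i l • M l := fun i => by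
    ext j
    simp [mul_apply, Finset.sum_apply]
  simp only [hrow, det_updateRow_sum, smul_eq_mul, trace, diag, Finset.sum_mul]

end Jacobi

theorem eq_mul_exp_sub_of_hasDerivAt_mul {f G a : ℝ → ℝ} {t₀ T : ℝ}
    (hG : ∀ t ∈ Icc t₀ T, HasDerivAt G (a t) t)
    (hf : ∀ t ∈ Icc t₀ T, HasDerivAt f (a t * f t) t) :
    ∀ t ∈ Icc t₀ T, f t = f t₀ * exp (G t - G t₀) := by
  have hconst : ∀ t ∈ Icc t₀ T, HasDerivAt (fun s => f s * exp (-G s)) 0 t := fun t ht =>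
    ((hf t ht).mul (hG t ht).neg.exp).congr_deriv (by ring)
  intro t ht
  have h := constant_of_has_deriv_right_zero
    (fun s hs => (hconst s hs).continuousAt.continuousWithinAt)
    (fun s hs => (hconst s (Ico_subset_Icc_self hs)).hasDerivWithinAt) t ht
  rw [exp_neg, exp_neg] at h
  rw [exp_sub]
  field_simp at h ⊢
  linarith

theorem eq_mul_exp_integral_of_hasDerivAt_mul {f a : ℝ → ℝ} {t₀ T : ℝ}
    (ha : ContinuousOn a (Icc t₀ T)) (hf : ∀ t ∈ Icc t₀ T, HasDerivAt f (a t * f t) t) :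
    ∀ t ∈ Icc t₀ T, f t = f t₀ * exp (∫ s in t₀..t, a s) := by
  intro t ht
  -- A continuous extension to all of `ℝ` makes `∫ a` two-sided differentiable at the endpoints.
  obtain ⟨ā, hā, hāa⟩ : ∃ ā : ℝ → ℝ, Continuous ā ∧ EqOn ā a (Icc t₀ T) :=
    ⟨IccExtend (ht.1.trans ht.2) (domRestrict _ a), ha.domRestrict.Icc_extend',
      fun s hs => IccExtend_of_mem _ _ hs⟩
  have hG : ∀ s ∈ Icc t₀ T, HasDerivAt (fun u => ∫ v in t₀..u, ā v) (a s) s := fun s hs =>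
    hāa hs ▸ hā.integral_hasStrictDerivAt t₀ s |>.hasDerivAt
  have hint : ∫ s in t₀..t, ā s = ∫ s in t₀..t, a s :=
    intervalIntegral.integral_congr fun s hs =>
      hāa ⟨(uIcc_of_le ht.1 ▸ hs).1, (uIcc_of_le ht.1 ▸ hs).2.trans ht.2⟩
  simpa [hint] using eq_mul_exp_sub_of_hasDerivAt_mul hG hf t ht

theorem stmt5_general (n : ℕ) (T : ℝ)
    (A F : ℝ → Matrix (Fin n) (Fin n) ℝ)
    (hA : ContinuousOn A (Set.Icc 0 T))
    (hF : ∀ t ∈ Set.Icc (0 : ℝ) T, HasDerivAt F (A t * F t) t) :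
    ∀ t ∈ Set.Icc (0 : ℝ) T,
      (F t).det = (F 0).det * Real.exp (∫ s in (0 : ℝ)..t, (A s).trace) :=
  eq_mul_exp_integral_of_hasDerivAt_mul (continuous_id.matrix_trace.comp_continuousOn hA)
    fun t ht => (hasDerivAt_det (hF t ht)).congr_deriv (sum_det_updateRow_mul _ _)

/-- Liouville's formula: if `F' = A F` on `[0,T]` with `A` continuous, then
`det F(t) = det F(0) · exp(∫₀ᵗ trace A(s) ds)` for every `t ∈ [0,T]`. -/
theorem stmt5 (n : ℕ) (hn : 1 ≤ n) (T : ℝ) (hT : 0 < T)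
    (A F : ℝ → Matrix (Fin n) (Fin n) ℝ)
    (hA : ContinuousOn A (Set.Icc 0 T))
    (hF : ∀ t ∈ Set.Icc (0 : ℝ) T, HasDerivAt F (A t * F t) t) :
    ∀ t ∈ Set.Icc (0 : ℝ) T,
      (F t).det = (F 0).det * Real.exp (∫ s in (0 : ℝ)..t, (A s).trace) :=
  stmt5_general n T A F hA hF
end

section
/- Let d ≥ 1, K ≥ 0, G ≥ 0, η > 0 and let φ : ℝ^{d×d} → ℝ be defined by φ(F) = d·K·‖sph E(F)‖² / (2 + η‖E(F)‖^{3/2}) + G·‖dev E(F)‖² / (1 + η‖E(F)‖^{3/2}) with E(F) = ½(FᵀF − I). Then φ is Fréchet differentiable on all of ℝ^{d×d} and its derivative is globally bounded: there exists ℓ ∈ ℝ such that ‖Dφ(F)‖ ≤ ℓ for all F ∈ ℝ^{d×d}, where ‖Dφ(F)‖ is the operator norm of the Fréchet derivative with respect to the Frobenius norm on ℝ^{d×d}. -/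
/-!
With `E = E(F)` and `s = ‖E‖^{1/2}`, `φ = ψ ∘ E` where `ψ` is a linear combination of quotients
`‖L E‖² / (a + η s³)` with `L` linear (`L = sph, dev`). Such a quotient has
`‖Dψ(E)‖ ≲ s² / (a + η s³) + s⁵ / (a + η s³)² ≲ 1 / (1 + s)`; it is differentiable also at `E = 0`
because the Frobenius norm comes from an inner product, for which `‖·‖^{3/2}` is `C¹`.
On the other hand `‖DE(F)‖ ≤ ‖F‖` and `‖F‖² = tr (FᵀF) = d + 2 tr E ≲ (1 + s)²`.
By the chain rule `‖Dφ(F)‖ ≤ ‖Dψ(E)‖ ‖DE(F)‖` is bounded.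
-/

open Matrix

attribute [local instance] Matrix.frobeniusNormedAddCommGroup Matrix.frobeniusNormedSpace

section Scalar

variable {a η s : ℝ}

theorem sq_mul_one_add_div_le (ha : 0 < a) (hη : 0 < η) (hs : 0 ≤ s) :
    s ^ 2 * (1 + s) / (a + η * s ^ 3) ≤ 1 / a + 2 / η := by
  rw [div_le_iff₀ (by positivity)]
  have hpoly : s ^ 2 * (1 + s) ≤ 1 + 2 * s ^ 3 := by
    nlinarith [mul_nonneg hs (sq_nonneg (s - 1)), sq_nonneg (s - 1)]
  have hexpand : (1 / a + 2 / η) * (a + η * s ^ 3)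
      = 1 + 2 * s ^ 3 + (η * s ^ 3 / a + 2 * a / η) := by
    field_simp
    ring
  have : 0 ≤ η * s ^ 3 / a + 2 * a / η := by positivity
  linarith

theorem pow_five_mul_one_add_div_le (ha : 0 < a) (hη : 0 < η) (hs : 0 ≤ s) :
    s ^ 5 * (1 + s) / (a + η * s ^ 3) ^ 2 ≤ 1 / a ^ 2 + 2 / η ^ 2 := by
  rw [div_le_iff₀ (by positivity)]
  have hpoly : s ^ 5 * (1 + s) ≤ 1 + 2 * s ^ 6 := by
    nlinarith [mul_nonneg (pow_nonneg hs 4) (sq_nonneg (s - 1)),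
      mul_nonneg (pow_nonneg hs 2) (sq_nonneg (s ^ 2 - 1)), sq_nonneg (s ^ 3 - 1),
      pow_nonneg hs 2, pow_nonneg hs 4, pow_nonneg hs 6]
  have hexpand : (1 / a ^ 2 + 2 / η ^ 2) * (a + η * s ^ 3) ^ 2 = 1 + 2 * s ^ 6 +
      (2 * η * s ^ 3 / a + η ^ 2 * s ^ 6 / a ^ 2 + 2 * a ^ 2 / η ^ 2 + 4 * a * s ^ 3 / η) := by
    field_simp
    ring
  have : 0 ≤ 2 * η * s ^ 3 / a + η ^ 2 * s ^ 6 / a ^ 2 + 2 * a ^ 2 / η ^ 2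
      + 4 * a * s ^ 3 / η := by positivity
  linarith

end Scalar

theorem Real.rpow_three_halves {r : ℝ} (hr : 0 ≤ r) : r ^ (3 / 2 : ℝ) = √r ^ 3 := by
  rw [Real.sqrt_eq_rpow, ← Real.rpow_natCast, ← Real.rpow_mul hr]
  norm_num

section NormedSpace

variable {V : Type*} [NormedAddCommGroup V] [NormedSpace ℝ V]

theorem ContinuousLinearMap.hasFDerivAt_apply_self {W : Type*} [NormedAddCommGroup W]
    [NormedSpace ℝ W] (B : V →L[ℝ] V →L[ℝ] W) (x : V) :
    HasFDerivAt (fun y => B y y) (B x + B.flip x) x := by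
  refine (B.hasFDerivAt_of_bilinear (hasFDerivAt_id x) (hasFDerivAt_id x)).congr_fderiv ?_
  ext h
  simp

def HasBoundedSqrtWeightedFDeriv (f : V → ℝ) : Prop :=
  Differentiable ℝ f ∧ ∃ C, ∀ x, ‖fderiv ℝ f x‖ * (1 + √‖x‖) ≤ C

namespace HasBoundedSqrtWeightedFDeriv

variable {f g : V → ℝ}

theorem add (hf : HasBoundedSqrtWeightedFDeriv f) (hg : HasBoundedSqrtWeightedFDeriv g) :
    HasBoundedSqrtWeightedFDeriv fun x => f x + g x := by
  obtain ⟨hf, Cf, hCf⟩ := hf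
  obtain ⟨hg, Cg, hCg⟩ := hg
  refine ⟨hf.add hg, Cf + Cg, fun x => ?_⟩
  rw [fderiv_fun_add (hf x) (hg x)]
  calc ‖fderiv ℝ f x + fderiv ℝ g x‖ * (1 + √‖x‖)
      ≤ (‖fderiv ℝ f x‖ + ‖fderiv ℝ g x‖) * (1 + √‖x‖) := by
        gcongr
        exact norm_add_le _ _
    _ ≤ Cf + Cg := by linarith [hCf x, hCg x]

theorem const_mul (hf : HasBoundedSqrtWeightedFDeriv f) (k : ℝ) :
    HasBoundedSqrtWeightedFDeriv fun x => k * f x := by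
  obtain ⟨hf, C, hC⟩ := hf
  refine ⟨hf.const_mul k, |k| * C, fun x => ?_⟩
  rw [fderiv_const_mul (hf x), norm_smul, Real.norm_eq_abs, mul_assoc]
  exact mul_le_mul_of_nonneg_left (hC x) (abs_nonneg k)

theorem comp {W : Type*} [NormedAddCommGroup W] [NormedSpace ℝ W] {ψ : V → ℝ} {E : W → V}
    {c : ℝ} (hψ : HasBoundedSqrtWeightedFDeriv ψ) (hE : Differentiable ℝ E) (hc : 0 ≤ c)
    (hE' : ∀ x h, ‖fderiv ℝ E x h‖ ≤ c * (1 + √‖E x‖) * ‖h‖) :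
    Differentiable ℝ (ψ ∘ E) ∧ ∃ ℓ, ∀ x, ‖fderiv ℝ (ψ ∘ E) x‖ ≤ ℓ := by
  obtain ⟨hψ, C, hC⟩ := hψ
  refine ⟨hψ.comp hE, c * C, fun x => ?_⟩
  have hDE : ‖fderiv ℝ E x‖ ≤ c * (1 + √‖E x‖) :=
    ContinuousLinearMap.opNorm_le_bound _ (by positivity) (hE' x)
  rw [fderiv_comp x (hψ (E x)) (hE x)]
  calc ‖(fderiv ℝ ψ (E x)).comp (fderiv ℝ E x)‖
      ≤ ‖fderiv ℝ ψ (E x)‖ * (c * (1 + √‖E x‖)) :=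
        (ContinuousLinearMap.opNorm_comp_le _ _).trans (by gcongr)
    _ = c * (‖fderiv ℝ ψ (E x)‖ * (1 + √‖E x‖)) := by ring
    _ ≤ c * C := by gcongr; exact hC (E x)

end HasBoundedSqrtWeightedFDeriv

end NormedSpace

section InnerProductSpace

variable {V W : Type*} [NormedAddCommGroup V] [InnerProductSpace ℝ V]
  [NormedAddCommGroup W] [InnerProductSpace ℝ W]

theorem norm_fderiv_norm_rpow_three_halves (x : V) :
    ‖fderiv ℝ (fun x : V => ‖x‖ ^ (3 / 2 : ℝ)) x‖ = 3 / 2 * √‖x‖ := by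
  rw [norm_fderiv_norm_id_rpow x (by norm_num), Real.sqrt_eq_rpow]
  norm_num

theorem hasBoundedSqrtWeightedFDeriv_div {q : V → ℝ} {q' : V → V →L[ℝ] ℝ} {c a η : ℝ}
    (hc : 0 ≤ c) (ha : 0 < a) (hη : 0 < η) (hq : ∀ x, HasFDerivAt q (q' x) x)
    (hq_le : ∀ x, |q x| ≤ c * ‖x‖ ^ 2) (hq'_le : ∀ x, ‖q' x‖ ≤ c * ‖x‖) :
    HasBoundedSqrtWeightedFDeriv fun x => q x / (a + η * ‖x‖ ^ (3 / 2 : ℝ)) := by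
  set D : V → ℝ := fun x => a + η * ‖x‖ ^ (3 / 2 : ℝ)
  set N' := fderiv ℝ (fun x : V => ‖x‖ ^ (3 / 2 : ℝ))
  have hD_eq x : D x = a + η * √‖x‖ ^ 3 := by
    simp only [D, Real.rpow_three_halves (norm_nonneg x)]
  have hD_pos x : 0 < D x := by rw [hD_eq]; positivity
  have hf x : HasFDerivAt (fun x => q x / D x)
      (q x • (-(D x ^ 2)⁻¹ • η • N' x) + (D x)⁻¹ • q' x) x := by
    have hD : HasFDerivAt D (η • N' x) x :=
      (((differentiable_norm_rpow (by norm_num) x).hasFDerivAt).const_mul η).const_add a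
    have hinv : HasFDerivAt (fun x => (D x)⁻¹) (-(D x ^ 2)⁻¹ • η • N' x) x :=
      (hasDerivAt_inv (hD_pos x).ne').comp_hasFDerivAt x hD
    simp only [div_eq_mul_inv]
    exact (hq x).mul hinv
  refine ⟨fun x => (hf x).differentiableAt,
    c * (1 / a + 2 / η) + 3 / 2 * c * η * (1 / a ^ 2 + 2 / η ^ 2), fun x => ?_⟩
  set s := √‖x‖
  have hs : 0 ≤ s := Real.sqrt_nonneg _
  have hx : ‖x‖ = s ^ 2 := (Real.sq_sqrt (norm_nonneg x)).symm
  have hnorm : ‖fderiv ℝ (fun x => q x / D x) x‖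
      ≤ c * s ^ 2 / D x + 3 / 2 * c * η * s ^ 5 / D x ^ 2 := by
    rw [(hf x).fderiv]
    calc _ ≤ ‖q x • (-(D x ^ 2)⁻¹ • η • N' x)‖ + ‖(D x)⁻¹ • q' x‖ := norm_add_le _ _
      _ = |q x| * ((D x ^ 2)⁻¹ * (η * (3 / 2 * s))) + (D x)⁻¹ * ‖q' x‖ := by
        simp only [norm_smul, norm_neg, norm_inv, Real.norm_eq_abs, abs_of_pos hη,
          abs_of_pos (hD_pos x), abs_of_pos (pow_pos (hD_pos x) 2),
          norm_fderiv_norm_rpow_three_halves, N', s]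
      _ ≤ c * ‖x‖ ^ 2 * ((D x ^ 2)⁻¹ * (η * (3 / 2 * s))) + (D x)⁻¹ * (c * ‖x‖) := by
        gcongr
        exacts [hq_le x, hq'_le x]
      _ = c * s ^ 2 / D x + 3 / 2 * c * η * s ^ 5 / D x ^ 2 := by
        rw [hx]
        field_simp
        ring
  calc ‖fderiv ℝ (fun x => q x / D x) x‖ * (1 + s)
      ≤ (c * s ^ 2 / D x + 3 / 2 * c * η * s ^ 5 / D x ^ 2) * (1 + s) := by gcongr
    _ = c * (s ^ 2 * (1 + s) / D x) + 3 / 2 * c * η * (s ^ 5 * (1 + s) / D x ^ 2) := by ring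
    _ ≤ c * (1 / a + 2 / η) + 3 / 2 * c * η * (1 / a ^ 2 + 2 / η ^ 2) := by
      rw [hD_eq]
      gcongr
      exacts [sq_mul_one_add_div_le ha hη hs, pow_five_mul_one_add_div_le ha hη hs]

theorem hasBoundedSqrtWeightedFDeriv_norm_sq_div (L : V →L[ℝ] W) {a η : ℝ} (ha : 0 < a)
    (hη : 0 < η) :
    HasBoundedSqrtWeightedFDeriv fun x => ‖L x‖ ^ 2 / (a + η * ‖x‖ ^ (3 / 2 : ℝ)) := by
  refine hasBoundedSqrtWeightedFDeriv_div (c := 2 * ‖L‖ ^ 2) (by positivity) ha hη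
    (fun x => L.hasFDerivAt.norm_sq) (fun x => ?_) (fun x => ?_)
  · rw [abs_of_nonneg (by positivity)]
    calc ‖L x‖ ^ 2 ≤ (‖L‖ * ‖x‖) ^ 2 := by gcongr; exact L.le_opNorm x
      _ ≤ 2 * ‖L‖ ^ 2 * ‖x‖ ^ 2 := by nlinarith [sq_nonneg (‖L‖ * ‖x‖)]
  · calc ‖2 • (innerSL ℝ (L x)).comp L‖ ≤ 2 * ‖(innerSL ℝ (L x)).comp L‖ := by
          simpa using norm_nsmul_le (n := 2) (a := (innerSL ℝ (L x)).comp L)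
      _ ≤ 2 * (‖L x‖ * ‖L‖) := by
          gcongr
          exact (ContinuousLinearMap.opNorm_comp_le _ _).trans_eq (by rw [innerSL_apply_norm])
      _ ≤ 2 * (‖L‖ * ‖x‖ * ‖L‖) := by gcongr; exact L.le_opNorm x
      _ = 2 * ‖L‖ ^ 2 * ‖x‖ := by ring

end InnerProductSpace

namespace Matrix

variable {m n : Type*} [Fintype m] [Fintype n]

theorem frobenius_parallelogram (A B : Matrix m n ℝ) :
    ‖A + B‖ * ‖A + B‖ + ‖A - B‖ * ‖A - B‖ = 2 * (‖A‖ * ‖A‖ + ‖B‖ * ‖B‖) := by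
  let e (A : Matrix m n ℝ) := WithLp.toLp 2 fun i => WithLp.toLp 2 (A i)
  have hadd : e (A + B) = e A + e B := rfl
  have hsub : e (A - B) = e A - e B := rfl
  change ‖e (A + B)‖ * ‖e (A + B)‖ + ‖e (A - B)‖ * ‖e (A - B)‖
    = 2 * (‖e A‖ * ‖e A‖ + ‖e B‖ * ‖e B‖)
  rw [hadd, hsub]
  simpa only [sq] using parallelogram_law_with_norm ℝ (e A) (e B)

noncomputable instance frobeniusInnerProductSpace : InnerProductSpace ℝ (Matrix m n ℝ) :=
  InnerProductSpace.ofNorm ℝ frobenius_parallelogram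

theorem norm_entry_le_frobenius_norm (A : Matrix m n ℝ) (i : m) (j : n) : ‖A i j‖ ≤ ‖A‖ :=
  (PiLp.norm_apply_le (WithLp.toLp 2 (A i)) j).trans
    (PiLp.norm_apply_le (WithLp.toLp 2 fun i => WithLp.toLp 2 (A i)) i)

theorem abs_trace_le (A : Matrix n n ℝ) : |trace A| ≤ Fintype.card n * ‖A‖ :=
  calc |trace A| ≤ ∑ i, |A i i| := Finset.abs_sum_le_sum_abs _ _
    _ ≤ ∑ _i : n, ‖A‖ := Finset.sum_le_sum fun i _ => norm_entry_le_frobenius_norm A i i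
    _ = Fintype.card n * ‖A‖ := by simp

theorem frobenius_norm_sq_eq_trace (F : Matrix m n ℝ) : ‖F‖ ^ 2 = trace (Fᵀ * F) := by
  rw [frobenius_norm_def, ← Real.rpow_natCast, ← Real.rpow_mul (by positivity)]
  simp only [Real.norm_eq_abs, Real.rpow_ofNat, sq_abs, one_div, Nat.cast_ofNat, ne_eq,
    OfNat.ofNat_ne_zero, not_false_eq_true, inv_mul_cancel₀, Real.rpow_one, trace, diag,
    mul_apply, transpose_apply, ← sq]
  exact Finset.sum_comm

noncomputable def transposeMulCLM : Matrix m n ℝ →L[ℝ] Matrix m n ℝ →L[ℝ] Matrix n n ℝ :=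
  LinearMap.mkContinuous₂
    (LinearMap.mk₂ ℝ (fun X Y => Xᵀ * Y) (fun _ _ _ => by simp [Matrix.add_mul])
      (fun _ _ _ => by simp) (fun _ _ _ => by simp [Matrix.mul_add]) (fun _ _ _ => by simp)) 1
    (fun X Y => by simpa [frobenius_norm_transpose] using frobenius_norm_mul Xᵀ Y)

variable [DecidableEq n]

noncomputable def greenLagrangeStrain (F : Matrix m n ℝ) : Matrix n n ℝ :=
  (1 / 2 : ℝ) • (Fᵀ * F - 1)

-- Stated existentially: `Matrix` carries the product topology as an instance, and a sum of
-- Frobenius-normed continuous linear maps does not elaborate in the type of `HasFDerivAt` here.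
theorem hasFDerivAt_greenLagrangeStrain (F : Matrix m n ℝ) :
    ∃ E' : Matrix m n ℝ →L[ℝ] Matrix n n ℝ, HasFDerivAt greenLagrangeStrain E' F ∧
      ∀ H, E' H = (1 / 2 : ℝ) • (Fᵀ * H + Hᵀ * F) :=
  ⟨_, ((transposeMulCLM.hasFDerivAt_apply_self F).sub_const 1).const_smul (1 / 2 : ℝ),
    fun _ => rfl⟩

theorem differentiable_greenLagrangeStrain :
    Differentiable ℝ (greenLagrangeStrain : Matrix m n ℝ → Matrix n n ℝ) := fun F => by
  obtain ⟨_, hE', -⟩ := hasFDerivAt_greenLagrangeStrain F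
  exact hE'.differentiableAt

theorem norm_fderiv_greenLagrangeStrain_apply_le (F H : Matrix m n ℝ) :
    ‖fderiv ℝ greenLagrangeStrain F H‖ ≤ ‖F‖ * ‖H‖ := by
  obtain ⟨E', hE', hE'_apply⟩ := hasFDerivAt_greenLagrangeStrain F
  rw [hE'.fderiv, hE'_apply, norm_smul, Real.norm_of_nonneg (by norm_num)]
  have h₁ := frobenius_norm_mul Fᵀ H
  have h₂ := frobenius_norm_mul Hᵀ F
  rw [frobenius_norm_transpose] at h₁ h₂
  linarith [norm_add_le (Fᵀ * H) (Hᵀ * F)]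

theorem norm_le_greenLagrangeStrain (F : Matrix m n ℝ) :
    ‖F‖ ≤ √(2 * Fintype.card n) * (1 + √‖greenLagrangeStrain F‖) := by
  set r := ‖greenLagrangeStrain F‖
  have htrace : ‖F‖ ^ 2 = Fintype.card n + 2 * trace (greenLagrangeStrain F) := by
    simp [greenLagrangeStrain, frobenius_norm_sq_eq_trace, trace_sub]
  have hsq : ‖F‖ ^ 2 ≤ (√(2 * Fintype.card n) * (1 + √r)) ^ 2 := by
    rw [mul_pow, Real.sq_sqrt (by positivity), htrace]
    have hr : (√r) ^ 2 = r := Real.sq_sqrt (norm_nonneg _)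
    nlinarith [le_abs_self (trace (greenLagrangeStrain F)), abs_trace_le (greenLagrangeStrain F),
      Real.sqrt_nonneg r, (Fintype.card n).cast_nonneg (α := ℝ)]
  exact (pow_le_pow_iff_left₀ (norm_nonneg F) (by positivity) two_ne_zero).mp hsq

noncomputable def sph : Matrix n n ℝ →L[ℝ] Matrix n n ℝ :=
  LinearMap.toContinuousLinearMap
    (((Fintype.card n : ℝ)⁻¹ • traceLinearMap n ℝ ℝ).smulRight (1 : Matrix n n ℝ))

theorem sph_apply (A : Matrix n n ℝ) :
    sph A = (trace A / Fintype.card n) • (1 : Matrix n n ℝ) := by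
  simp [sph, div_eq_inv_mul]

end Matrix

theorem stmt16_general (d : ℕ) (K G η : ℝ) (hη : 0 < η)
    (E sphE devE : Matrix (Fin d) (Fin d) ℝ → Matrix (Fin d) (Fin d) ℝ)
    (hE : ∀ F, E F = (1 / 2 : ℝ) • (Fᵀ * F - 1))
    (hsph : ∀ F, sphE F = (Matrix.trace (E F) / (d : ℝ)) • (1 : Matrix (Fin d) (Fin d) ℝ))
    (hdev : ∀ F, devE F = E F - sphE F)
    (φ : Matrix (Fin d) (Fin d) ℝ → ℝ)
    (hφ : ∀ F, φ F = (d : ℝ) * K * ‖sphE F‖ ^ 2 / (2 + η * ‖E F‖ ^ (3 / 2 : ℝ))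
        + G * ‖devE F‖ ^ 2 / (1 + η * ‖E F‖ ^ (3 / 2 : ℝ))) :
    Differentiable ℝ φ ∧ ∃ ℓ : ℝ, ∀ F, @Norm.norm _ ContinuousLinearMap.hasOpNorm (fderiv ℝ φ F) ≤ ℓ := by
  set dev := ContinuousLinearMap.id ℝ (Matrix (Fin d) (Fin d) ℝ) - sph
  have hψ := ((hasBoundedSqrtWeightedFDeriv_norm_sq_div sph two_pos hη).const_mul (d * K)).add
    ((hasBoundedSqrtWeightedFDeriv_norm_sq_div dev one_pos hη).const_mul G)
  have hφψ : φ = (fun A => (d * K) * (‖sph A‖ ^ 2 / (2 + η * ‖A‖ ^ (3 / 2 : ℝ)))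
      + G * (‖dev A‖ ^ 2 / (1 + η * ‖A‖ ^ (3 / 2 : ℝ)))) ∘ greenLagrangeStrain := by
    funext F
    simp [hφ, hsph, hdev, hE, dev, sph_apply, greenLagrangeStrain, mul_div_assoc]
  rw [hφψ]
  exact hψ.comp (c := √(2 * Fintype.card (Fin d))) differentiable_greenLagrangeStrain
    (by positivity) fun F H =>
    (norm_fderiv_greenLagrangeStrain_apply_le F H).trans
      (by gcongr; exact norm_le_greenLagrangeStrain F)

/-- The regularized stored energy
`φ(F) = dK‖sph E‖²/(2+η‖E‖^{3/2}) + G‖dev E‖²/(1+η‖E‖^{3/2})`, `E = ½(FᵀF−I)`,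
is Fréchet differentiable everywhere with globally bounded derivative:
`∃ ℓ, ‖Dφ(F)‖ ≤ ℓ` (operator norm w.r.t. the Frobenius norm). -/
theorem stmt16 (d : ℕ) (hd : 1 ≤ d) (K G η : ℝ) (hK : 0 ≤ K) (hG : 0 ≤ G) (hη : 0 < η)
    (E sphE devE : Matrix (Fin d) (Fin d) ℝ → Matrix (Fin d) (Fin d) ℝ)
    (hE : ∀ F, E F = (1 / 2 : ℝ) • (Fᵀ * F - 1))
    (hsph : ∀ F, sphE F = (Matrix.trace (E F) / (d : ℝ)) • (1 : Matrix (Fin d) (Fin d) ℝ))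
    (hdev : ∀ F, devE F = E F - sphE F)
    (φ : Matrix (Fin d) (Fin d) ℝ → ℝ)
    (hφ : ∀ F, φ F = (d : ℝ) * K * ‖sphE F‖ ^ 2 / (2 + η * ‖E F‖ ^ (3 / 2 : ℝ))
        + G * ‖devE F‖ ^ 2 / (1 + η * ‖E F‖ ^ (3 / 2 : ℝ))) :
    Differentiable ℝ φ ∧ ∃ ℓ : ℝ, ∀ F, @Norm.norm _ ContinuousLinearMap.hasOpNorm (fderiv ℝ φ F) ≤ ℓ :=
  stmt16_general d K G η hη E sphE devE hE hsph hdev φ hφ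
end
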